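/- Let A be a finite alphabet of size σ ≥ 2. For every n ≥ 2, the expected length of the maximal unbordered factor of a uniformly random string of length n over A satisfies (1/σ^n) · Σ_{S ∈ A^n} b(S) ≥ n·(1 − σ^{−1} − σ^{−2}). -/

import Mathlib

/-!
An unbordered string of length `n` is its own maximal unbordered factor, so the sum is at least
`n` times the number of unbordered strings, and it suffices to show that at most
`σ ^ (n - 1) + σ ^ (n - 2)` strings of length `n` are bordered.

A border of length `n - p` is the same thing as a period `p`, and a period `p` with `2 p < n`
can be doubled, so a bordered string has a period `q` with `n ≤ 2 q < 2 n`. If its first and last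
letters differ, then `q ≤ n - 2`, and the string is determined by its first `q` letters, among
which those at positions `0` and `n - 1 - q` differ: at most `σ ^ q - σ ^ (q - 1)` strings. These
bounds telescope to `σ ^ (n - 2)`, while `σ ^ (n - 1)` strings have equal first and last letters.
-/

open List Finset Filter

/-- `S` is unbordered: it has no nonempty proper prefix that is also a suffix. -/
def Unbordered {α : Type*} (S : List α) : Prop :=
  ∀ B : List α, B ≠ [] → B.length < S.length → B <+: S → ¬ B <:+ S

/-- The length of the maximal unbordered factor of `S`. -/
noncomputable def muf {α : Type*} (S : List α) : ℕ :=
  sSup {k | ∃ F : List α, F <:+: S ∧ Unbordered F ∧ F.length = k}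

variable {α : Type*}

theorem length_le_muf_of_unbordered {S : List α} (h : Unbordered S) : S.length ≤ muf S :=
  le_csSup ⟨S.length, fun _ ⟨_, hF, _, hk⟩ => hk ▸ hF.length_le⟩ ⟨S, infix_refl S, h, rfl⟩

namespace List

instance [DecidableEq α] (w : List α) (p : ℕ) : Decidable (w.HasPeriod p) :=
  inferInstanceAs (Decidable (w <+: _))

variable {w B : List α} {p q : ℕ}

theorem hasPeriod_of_prefix_of_suffix (hp : B <+: w) (hs : B <:+ w) :
    w.HasPeriod (w.length - B.length) := by
  obtain ⟨Y, rfl⟩ := hs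
  have hY : (Y ++ B).take ((Y ++ B).length - B.length) = Y := by simp
  rw [HasPeriod, hY]
  exact (prefix_append_right_inj Y).mpr hp

theorem exists_hasPeriod_of_not_unbordered (h : ¬ Unbordered w) :
    ∃ p, 0 < p ∧ p < w.length ∧ w.HasPeriod p := by
  simp only [Unbordered, not_forall, not_not] at h
  obtain ⟨B, hB, hBw, hp, hs⟩ := h
  exact ⟨w.length - B.length, by omega, by have := length_pos_iff.mpr hB; omega,
    hasPeriod_of_prefix_of_suffix hp hs⟩

theorem HasPeriod.add (hp : w.HasPeriod p) (hq : w.HasPeriod q) : w.HasPeriod (p + q) := by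
  rw [hasPeriod_iff_getElem?] at *
  intro i hi
  rw [hp i (by omega), hq (i + p) (by omega), Nat.add_assoc]

theorem HasPeriod.exists_le_two_mul (hw : w.HasPeriod p) (hp : 0 < p) (hpw : p < w.length) :
    ∃ q, p ≤ q ∧ q < w.length ∧ w.length ≤ 2 * q ∧ w.HasPeriod q := by
  classical
  obtain ⟨q, hq, hmax⟩ := exists_max_image {q ∈ Finset.range w.length | w.HasPeriod q} id
    ⟨p, by simpa [hpw] using hw⟩
  simp only [Finset.mem_filter, Finset.mem_range, id] at hq hmax
  have hpq := hmax p ⟨hpw, hw⟩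
  refine ⟨q, hpq, hq.1, ?_, hq.2⟩
  by_contra! h
  have := hmax (q + q) ⟨by omega, hq.2.add hq.2⟩
  omega

variable {n : ℕ} {f g : Fin n → α}

theorem HasPeriod.ofFn_apply_mod (h : (ofFn f).HasPeriod p) (i : Fin n) :
    f ⟨i % p, (Nat.mod_le _ _).trans_lt i.2⟩ = f i := by
  have hi := h.getElem?_mod p i (ofFn f) (by simp)
  simp only [List.getElem?_ofFn, length_ofFn, Fin.is_lt, getElem?_pos, List.getElem_ofFn,
    Fin.eta, Option.dite_none_right_eq_some, Option.some.injEq] at hi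
  exact hi.2

theorem HasPeriod.ofFn_apply_eq (h : (ofFn f).HasPeriod p) {i j : Fin n}
    (hij : (i : ℕ) + p = j) : f i = f j := by
  rw [← h.ofFn_apply_mod i, ← h.ofFn_apply_mod j]
  simp [← hij]

theorem HasPeriod.ofFn_ext (hf : (ofFn f).HasPeriod p) (hg : (ofFn g).HasPeriod p) (hp : 0 < p)
    (h : ∀ i : Fin n, (i : ℕ) < p → f i = g i) : f = g := by
  funext i
  rw [← hf.ofFn_apply_mod i, ← hg.ofFn_apply_mod i]
  exact h _ (Nat.mod_lt _ hp)

theorem exists_hasPeriod_mem_Ico_of_not_unbordered (hn : 0 < n) (hf : ¬ Unbordered (ofFn f))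
    (hne : f ⟨0, hn⟩ ≠ f ⟨n - 1, by omega⟩) :
    ∃ q ∈ Finset.Ico ((n + 1) / 2) (n - 1), (ofFn f).HasPeriod q := by
  obtain ⟨p, hp, hpn, hper⟩ := exists_hasPeriod_of_not_unbordered hf
  obtain ⟨q, hpq, hqn, hnq, hq⟩ := hper.exists_le_two_mul hp (by simpa using hpn)
  rw [length_ofFn] at hqn hnq
  have hq1 : q ≠ n - 1 := fun hq1 => hne (hq.ofFn_apply_eq (by simp [hq1]))
  exact ⟨q, Finset.mem_Ico.mpr ⟨by omega, by omega⟩, hq⟩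

end List

section Counting

variable [Fintype α]

theorem card_filter_apply_eq [DecidableEq α] {ι : Type*} [Fintype ι] [DecidableEq ι] {a b : ι}
    (hab : a ≠ b) : #{g : ι → α | g a = g b} = Fintype.card α ^ (Fintype.card ι - 1) := by
  let e : {g : ι → α // g a = g b} ≃ ({i // i ≠ b} → α) :=
    { toFun g i := g.1 i
      invFun h := ⟨fun i => if hi : i = b then h ⟨a, hab⟩ else h ⟨i, hi⟩, by simp [hab]⟩
      left_inv g := by ext i; by_cases hi : i = b <;> simp [hi, g.2]
      right_inv h := by ext i; simp [i.2] }
  rw [← Fintype.card_subtype, Fintype.card_congr e, Fintype.card_fun, Fintype.card_subtype_compl,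
    Fintype.card_subtype_eq]

theorem card_filter_apply_ne_add [DecidableEq α] {ι : Type*} [Fintype ι] [DecidableEq ι]
    {a b : ι} (hab : a ≠ b) :
    #{g : ι → α | g a ≠ g b} + Fintype.card α ^ (Fintype.card ι - 1) =
      Fintype.card α ^ Fintype.card ι := by
  rw [← card_filter_apply_eq hab, add_comm, card_filter_add_card_filter_not, card_univ,
    Fintype.card_fun]

theorem card_filter_hasPeriod_le [DecidableEq α] {n p : ℕ} (hp : 0 < p) (hpn : p ≤ n)
    (P : (Fin p → α) → Prop) [DecidablePred P] :
    #{f : Fin n → α | (ofFn f).HasPeriod p ∧ P (fun j => f (Fin.castLE hpn j))} ≤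
      #{g | P g} := by
  refine card_le_card_of_injOn (fun f j => f (Fin.castLE hpn j)) (fun f hf => ?_) ?_
  · simp only [coe_filter, mem_univ, true_and, Set.mem_ofPred_eq] at hf ⊢
    exact hf.2
  · intro f hf g hg hfg
    simp only [coe_filter, mem_univ, true_and, Set.mem_ofPred_eq] at hf hg
    exact hf.1.ofFn_ext hg.1 hp fun i hi => congrFun hfg ⟨i, hi⟩

theorem card_hasPeriod_apply_ne_le [DecidableEq α] {n p : ℕ} (hpn : p + 1 < n)
    (hnp : n ≤ 2 * p) :
    (#{f : Fin n → α | (ofFn f).HasPeriod p ∧ f ⟨0, by omega⟩ ≠ f ⟨n - 1, by omega⟩} : ℝ) ≤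
      (Fintype.card α : ℝ) ^ p - (Fintype.card α : ℝ) ^ (p - 1) := by
  have hp : 0 < p := by omega
  let a : Fin p := ⟨0, hp⟩
  let b : Fin p := ⟨n - 1 - p, by omega⟩
  have hcount : (#{g : Fin p → α | g a ≠ g b} : ℝ) + (Fintype.card α : ℝ) ^ (p - 1) =
      (Fintype.card α : ℝ) ^ p := by
    exact_mod_cast Fintype.card_fin p ▸ card_filter_apply_ne_add (α := α) (a := a) (b := b)
      (by simp [a, b]; omega)
  calc (#{f : Fin n → α | (ofFn f).HasPeriod p ∧ f ⟨0, _⟩ ≠ f ⟨n - 1, _⟩} : ℝ)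
      ≤ #{f : Fin n → α | (ofFn f).HasPeriod p ∧
          f (Fin.castLE (by omega) a) ≠ f (Fin.castLE (by omega) b)} := by
        refine Nat.cast_le.mpr
          (card_le_card (monotone_filter_right _ fun f _ ⟨hf, hne⟩ => ⟨hf, ?_⟩))
        have := hf.ofFn_apply_eq (i := ⟨n - 1 - p, by omega⟩) (j := ⟨n - 1, by omega⟩)
          (by simp; omega)
        simpa [a, b, this] using hne
    _ ≤ #{g : Fin p → α | g a ≠ g b} :=
        Nat.cast_le.mpr (card_filter_hasPeriod_le hp (by omega) fun g => g a ≠ g b)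
    _ = _ := by linarith

open Classical in
theorem card_not_unbordered_le [DecidableEq α] {n : ℕ} (hn : 2 ≤ n) :
    (#{f : Fin n → α | ¬ Unbordered (ofFn f)} : ℝ) ≤
      (Fintype.card α : ℝ) ^ (n - 1) + (Fintype.card α : ℝ) ^ (n - 2) := by
  set σ : ℝ := (Fintype.card α : ℝ)
  let first : Fin n := ⟨0, by omega⟩
  let last : Fin n := ⟨n - 1, by omega⟩
  let periods := Finset.Ico ((n + 1) / 2) (n - 1)
  let E (q : ℕ) : Finset (Fin n → α) := {f | (ofFn f).HasPeriod q ∧ f first ≠ f last}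
  have hcover : ({f | ¬ Unbordered (ofFn f)} : Finset (Fin n → α)) ⊆
      ({f | f first = f last} : Finset (Fin n → α)) ∪ periods.biUnion E := by
    intro f hf
    rw [Finset.mem_filter] at hf
    by_cases h : f first = f last
    · simp [h]
    · obtain ⟨q, hq, hper⟩ := exists_hasPeriod_mem_Ico_of_not_unbordered (by omega) hf.2 h
      exact mem_union_right _ (mem_biUnion.mpr ⟨q, hq, by simp [E, hper, h]⟩)
  have hfirst : #{f : Fin n → α | f first = f last} = σ ^ (n - 1) := by
    rw [card_filter_apply_eq (by simp [first, last]; omega), Fintype.card_fin]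
    push_cast
    rfl
  have hE (q : ℕ) (hq : q ∈ periods) : (#(E q) : ℝ) ≤ σ ^ q - σ ^ (q - 1) := by
    rw [Finset.mem_Ico] at hq
    exact card_hasPeriod_apply_ne_le (by omega) (by omega)
  have htelescope : ∑ q ∈ periods, (σ ^ q - σ ^ (q - 1)) = σ ^ (n - 2) - σ ^ ((n + 1) / 2 - 1) := by
    simpa [Nat.sub_sub] using
      Finset.sum_Ico_sub (fun q => σ ^ (q - 1)) (by omega : (n + 1) / 2 ≤ n - 1)
  calc (#{f : Fin n → α | ¬ Unbordered (ofFn f)} : ℝ)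
      ≤ #{f : Fin n → α | f first = f last} + ∑ q ∈ periods, (#(E q) : ℝ) := by
        exact_mod_cast (card_le_card hcover).trans
          ((card_union_le _ _).trans (Nat.add_le_add_left card_biUnion_le _))
    _ ≤ σ ^ (n - 1) + (σ ^ (n - 2) - σ ^ ((n + 1) / 2 - 1)) := by
        rw [hfirst, ← htelescope]
        exact add_le_add_right (Finset.sum_le_sum hE) _
    _ ≤ σ ^ (n - 1) + σ ^ (n - 2) := by
        linarith [pow_nonneg (Nat.cast_nonneg (Fintype.card α) : (0 : ℝ) ≤ σ) ((n + 1) / 2 - 1)]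

open Classical in
theorem card_unbordered_ge [DecidableEq α] {n : ℕ} (hn : 2 ≤ n) :
    (Fintype.card α : ℝ) ^ n - (Fintype.card α : ℝ) ^ (n - 1) - (Fintype.card α : ℝ) ^ (n - 2) ≤
      #{f : Fin n → α | Unbordered (ofFn f)} := by
  have hsplit : (#{f : Fin n → α | Unbordered (ofFn f)} : ℝ) +
      #{f : Fin n → α | ¬ Unbordered (ofFn f)} = (Fintype.card α : ℝ) ^ n := by
    exact_mod_cast (card_filter_add_card_filter_not _).trans (by simp)
  linarith [card_not_unbordered_le (α := α) hn]

open Classical in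
theorem card_unbordered_mul_le_sum_muf {n : ℕ} :
    (n : ℝ) * #{f : Fin n → α | Unbordered (ofFn f)} ≤ ∑ f : Fin n → α, (muf (ofFn f) : ℝ) :=
  calc (n : ℝ) * #{f : Fin n → α | Unbordered (ofFn f)}
      = ∑ _f ∈ {f : Fin n → α | Unbordered (ofFn f)}, (n : ℝ) := by
        rw [sum_const, nsmul_eq_mul, mul_comm]
    _ ≤ ∑ f ∈ {f : Fin n → α | Unbordered (ofFn f)}, (muf (ofFn f) : ℝ) :=
        Finset.sum_le_sum fun f hf => by
          exact_mod_cast length_ofFn (f := f) ▸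
            length_le_muf_of_unbordered (Finset.mem_filter.mp hf).2
    _ ≤ ∑ f : Fin n → α, (muf (ofFn f) : ℝ) :=
        sum_le_sum_of_subset_of_nonneg (subset_univ _) fun _ _ _ => Nat.cast_nonneg _

end Counting

theorem expected_muf_simple_bound (σ n : ℕ) (hσ : 2 ≤ σ) (hn : 2 ≤ n) :
    (1 / (σ : ℝ) ^ n) * ∑ f : Fin n → Fin σ, (muf (List.ofFn f) : ℝ) ≥
      (n : ℝ) * (1 - (σ : ℝ)⁻¹ - ((σ : ℝ) ^ 2)⁻¹) := by
  have hunbordered := card_unbordered_ge (α := Fin σ) hn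
  rw [Fintype.card_fin] at hunbordered
  have hσ0 : (σ : ℝ) ≠ 0 := by positivity
  obtain ⟨m, rfl⟩ : ∃ m, n = m + 2 := ⟨n - 2, by omega⟩
  calc ((m + 2 : ℕ) : ℝ) * (1 - (σ : ℝ)⁻¹ - ((σ : ℝ) ^ 2)⁻¹)
      = 1 / (σ : ℝ) ^ (m + 2) *
          (((m + 2 : ℕ) : ℝ) * (σ ^ (m + 2) - σ ^ (m + 2 - 1) - σ ^ (m + 2 - 2))) := by
        field_simp
        simp only [Nat.add_sub_cancel, show m + 2 - 1 = m + 1 from rfl]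
        ring
    _ ≤ 1 / (σ : ℝ) ^ (m + 2) * ∑ f : Fin (m + 2) → Fin σ, (muf (ofFn f) : ℝ) := by
        gcongr
        exact (mul_le_mul_of_nonneg_left hunbordered (by positivity)).trans
          card_unbordered_mul_le_sum_muf
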